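/- arXiv:2104.08242 — 2 statements merged into one kernel-verified Lean document; each statement's English description precedes it below -/
import Mathlib

section
/- For every t ≥ 0, the following identity holds: (μρ/β)(1 − θ_t) = μ_I (ρ/(β+ρ))(1 − e^{−(β+ρ)t}) + μ_S (ρ/(β+ρ))(1 − e^{−(β+ρ)t}) − ρ α_S Σ_{k≥1} k p_k ∫_0^t θ_s^{k−1} e^{−(β+ρ)(t−s)} ds, where the series on the right converges. -/
open scoped BigOperators
open Real

noncomputable def vS (αS : ℝ) (p : ℕ → ℝ) (θ : ℝ) : ℝ := αS * ∑' k : ℕ, p k * θ ^ k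

noncomputable def hS (αS : ℝ) (p : ℕ → ℝ) (θ : ℝ) : ℝ := αS * ∑' k : ℕ, (k : ℝ) * p k * θ ^ k

noncomputable def hX (μ : ℝ) (θ : ℝ) : ℝ := μ * θ ^ 2

noncomputable def hR (μ μR β ρ : ℝ) (θ : ℝ) : ℝ := μR * θ + μ * ρ / β * (θ * (1 - θ))

noncomputable def hI (αS μ μR β ρ : ℝ) (p : ℕ → ℝ) (θ : ℝ) : ℝ :=
  hX μ θ - hS αS p θ - hR μ μR β ρ θ

noncomputable def F (β ρ t : ℝ) : ℝ := ρ / (β + ρ) + β / (β + ρ) * Real.exp (-(β + ρ) * t)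

/-!
Put `φ t = (μρ/β)(1 - θ t)`. Since `h_S(θ) = α_S θ Σ k p_k θ^(k-1)`, the equation for `θ` becomes
the linear equation `φ' = ρ(μ_I + μ_S) - ρ α_S Σ k p_k θ^(k-1) - (β + ρ) φ` with `φ 0 = 0`, and
variation of constants gives the identity. The series may be integrated termwise because
`|θ| ≤ 1` makes it dominated by the summable `Σ k p_k`.
-/

open Set MeasureTheory

theorem eq_exp_mul_add_integral_of_hasDerivAt {φ g : ℝ → ℝ} {c a b : ℝ}
    (hg : ContinuousOn g (uIcc a b)) (hφ : ∀ s ∈ uIcc a b, HasDerivAt φ (g s - c * φ s) s) :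
    φ b = exp (-c * (b - a)) * φ a + ∫ s in a..b, g s * exp (-c * (b - s)) := by
  have hderiv : ∀ s ∈ uIcc a b,
      HasDerivAt (fun u => exp (-c * (b - u)) * φ u) (g s * exp (-c * (b - s))) s := by
    intro s hs
    have he : HasDerivAt (fun u => exp (-c * (b - u))) (exp (-c * (b - s)) * c) s := by
      simpa using (((hasDerivAt_id s).const_sub b).const_mul (-c)).exp
    exact (he.mul (hφ s hs)).congr_deriv (by ring)
  have hint : IntervalIntegrable (fun s => g s * exp (-c * (b - s))) volume a b :=
    (hg.mul (by fun_prop : Continuous fun s => exp (-c * (b - s))).continuousOn).intervalIntegrable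
  rw [intervalIntegral.integral_eq_sub_of_hasDerivAt hderiv hint]
  simp

theorem integral_exp_neg_mul_sub {c : ℝ} (hc : c ≠ 0) (a b : ℝ) :
    ∫ s in a..b, exp (-c * (b - s)) = (1 - exp (-c * (b - a))) / c := by
  have hderiv : ∀ s ∈ uIcc a b,
      HasDerivAt (fun u => exp (-c * (b - u)) / c) (exp (-c * (b - s))) s := by
    intro s _
    have := ((((hasDerivAt_id' s).const_sub b).const_mul (-c)).exp).div_const c
    exact this.congr_deriv (by field_simp)
  rw [intervalIntegral.integral_eq_sub_of_hasDerivAt hderiv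
    ((by fun_prop : Continuous fun s => exp (-c * (b - s))).intervalIntegrable _ _)]
  simp [sub_div]

theorem norm_mul_pow_le_of_norm_le_one {a x : ℝ} (hx : ‖x‖ ≤ 1) (n : ℕ) :
    ‖a * x ^ n‖ ≤ ‖a‖ := by
  rw [norm_mul, norm_pow]
  exact mul_le_of_le_one_right (norm_nonneg a) (pow_le_one₀ (norm_nonneg x) hx)

section PowerSeries

variable {a : ℕ → ℝ} {θ : ℝ → ℝ}

theorem continuousOn_tsum_mul_pow (ha : Summable a) {S : Set ℝ} (hθ : ContinuousOn θ S)
    (hθ1 : ∀ s ∈ S, ‖θ s‖ ≤ 1) (n : ℕ → ℕ) :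
    ContinuousOn (fun s => ∑' k, a k * θ s ^ n k) S :=
  continuousOn_tsum (fun _ => continuousOn_const.mul (hθ.pow _)) ha.norm
    fun k s hs => norm_mul_pow_le_of_norm_le_one (hθ1 s hs) (n k)

theorem hasSum_mul_intervalIntegral_pow_mul (ha : Summable a) {w : ℝ → ℝ} {x y : ℝ}
    (hθ : ContinuousOn θ (uIcc x y)) (hθ1 : ∀ s ∈ uIcc x y, ‖θ s‖ ≤ 1)
    (hw : ContinuousOn w (uIcc x y)) (n : ℕ → ℕ) :
    HasSum (fun k => a k * ∫ s in x..y, θ s ^ n k * w s)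
      (∫ s in x..y, (∑' k, a k * θ s ^ n k) * w s) := by
  obtain ⟨C, hC⟩ := isCompact_uIcc.exists_bound_of_continuousOn hw
  simp_rw [← intervalIntegral.integral_const_mul]
  refine intervalIntegral.hasSum_integral_of_dominated_convergence (fun k _ => ‖a k‖ * C)
    (fun k => ((continuousOn_const.mul ((hθ.pow _).mul hw)).mono uIoc_subset_uIcc)
      |>.aestronglyMeasurable measurableSet_uIoc)
    (fun k => ae_of_all _ fun s hs => ?_)
    (ae_of_all _ fun _ _ => ha.norm.mul_right C) intervalIntegrable_const
    (ae_of_all _ fun s hs => ?_)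
  · rw [← mul_assoc, norm_mul]
    exact mul_le_mul (norm_mul_pow_le_of_norm_le_one (hθ1 s (uIoc_subset_uIcc hs)) _)
      (hC s (uIoc_subset_uIcc hs)) (norm_nonneg _) (norm_nonneg _)
  · simp_rw [← mul_assoc]
    exact (ha.norm.of_norm_bounded fun k =>
      norm_mul_pow_le_of_norm_le_one (hθ1 s (uIoc_subset_uIcc hs)) (n k)).hasSum.mul_right (w s)

end PowerSeries

theorem tsum_natCast_mul_mul_pow (p : ℕ → ℝ) (x : ℝ) :
    ∑' k : ℕ, (k : ℝ) * p k * x ^ k = x * ∑' k : ℕ, (k : ℝ) * p k * x ^ (k - 1) := by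
  rw [← tsum_mul_left]
  congr 1 with (_ | k)
  · simp
  · rw [Nat.add_sub_cancel, pow_succ]; ring

theorem hasDerivAt_mul_one_sub_of_hasDerivAt {β ρ μ μR αS s : ℝ} {p : ℕ → ℝ} {θ : ℝ → ℝ}
    (hβ : β ≠ 0) (hμ : μ ≠ 0) (hθs : θ s ≠ 0)
    (hθ : HasDerivAt θ (-β * θ s * hI αS μ μR β ρ p (θ s) / hX μ (θ s)) s) :
    HasDerivAt (fun u => μ * ρ / β * (1 - θ u))
      (ρ * (μ - μR) - ρ * αS * ∑' k : ℕ, (k : ℝ) * p k * θ s ^ (k - 1)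
        - (β + ρ) * (μ * ρ / β * (1 - θ s))) s := by
  refine (hθ.const_sub 1).const_mul (μ * ρ / β) |>.congr_deriv ?_
  rw [hI, hS, hX, hR, tsum_natCast_mul_mul_pow]
  field_simp
  ring

theorem stmt7_general
    (β ρ μ μS μI μR αS : ℝ) (p : ℕ → ℝ) (θ : ℝ → ℝ)
    (hβ : 0 < β) (hρ : 0 ≤ ρ) (hμ : 0 < μ)
    (hμsum : μS + μI + μR = μ)
    (hmeanSummable : Summable (fun k : ℕ => (k : ℝ) * p k))
    (hθ0 : θ 0 = 1)
    (hθmem : ∀ t, 0 ≤ t → θ t ∈ Set.Ioc (0 : ℝ) 1)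
    (hθderiv : ∀ t, 0 ≤ t →
      HasDerivAt θ (-β * θ t * hI αS μ μR β ρ p (θ t) / hX μ (θ t)) t)
    (t : ℝ) (ht : 0 ≤ t) :
    Summable (fun k : ℕ => (k : ℝ) * p k *
      ∫ s in (0 : ℝ)..t, θ s ^ (k - 1) * Real.exp (-(β + ρ) * (t - s))) ∧
    μ * ρ / β * (1 - θ t) =
      μI * (ρ / (β + ρ)) * (1 - Real.exp (-(β + ρ) * t)) +
        μS * (ρ / (β + ρ)) * (1 - Real.exp (-(β + ρ) * t)) -
        ρ * αS * ∑' k : ℕ, (k : ℝ) * p k *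
          ∫ s in (0 : ℝ)..t, θ s ^ (k - 1) * Real.exp (-(β + ρ) * (t - s)) := by
  have hc : β + ρ ≠ 0 := by positivity
  have hθs : ∀ s ∈ uIcc 0 t, 0 ≤ s ∧ θ s ∈ Ioc 0 1 := fun s hs =>
    have hs0 : 0 ≤ s := ((uIcc_of_le ht) ▸ hs).1
    ⟨hs0, hθmem s hs0⟩
  have hθc : ContinuousOn θ (uIcc 0 t) := fun s hs =>
    (hθderiv s (hθs s hs).1).continuousAt.continuousWithinAt
  have hθ1 : ∀ s ∈ uIcc 0 t, ‖θ s‖ ≤ 1 := fun s hs => by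
    obtain ⟨-, h0, h1⟩ := hθs s hs
    rwa [norm_of_nonneg h0.le]
  have hsum := hasSum_mul_intervalIntegral_pow_mul hmeanSummable hθc hθ1
    (w := fun s => exp (-(β + ρ) * (t - s))) (by fun_prop) (· - 1)
  refine ⟨hsum.summable, ?_⟩
  set M := fun s => ∑' k : ℕ, (k : ℝ) * p k * θ s ^ (k - 1)
  have hM : ContinuousOn M (uIcc 0 t) := continuousOn_tsum_mul_pow hmeanSummable hθc hθ1 _
  have hφ := eq_exp_mul_add_integral_of_hasDerivAt (c := β + ρ)
    (g := fun s => ρ * (μ - μR) - ρ * αS * M s)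
    (continuousOn_const.sub (continuousOn_const.mul hM))
    fun s hs => hasDerivAt_mul_one_sub_of_hasDerivAt hβ.ne' hμ.ne' (hθs s hs).2.1.ne'
      (hθderiv s (hθs s hs).1)
  rw [hθ0, sub_self, mul_zero, mul_zero, zero_add] at hφ
  have he : Continuous fun s => exp (-(β + ρ) * (t - s)) := by fun_prop
  have hsplit : ∫ s in (0 : ℝ)..t, (ρ * (μ - μR) - ρ * αS * M s) * exp (-(β + ρ) * (t - s)) =
      ρ * (μ - μR) * (∫ s in (0 : ℝ)..t, exp (-(β + ρ) * (t - s)))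
        - ρ * αS * ∫ s in (0 : ℝ)..t, M s * exp (-(β + ρ) * (t - s)) := by
    rw [← intervalIntegral.integral_const_mul, ← intervalIntegral.integral_const_mul,
      ← intervalIntegral.integral_sub ((he.intervalIntegrable _ _).const_mul _)
        ((hM.mul he.continuousOn).intervalIntegrable.const_mul (ρ * αS)
          (f := fun s => M s * exp (-(β + ρ) * (t - s))))]
    congr 1 with s
    ring
  rw [hφ, hsum.tsum_eq, hsplit, integral_exp_neg_mul_sub hc, sub_zero, show μ - μR = μI + μS by linarith]
  ring

theorem stmt7
    (β ρ μ μS μI μR αS : ℝ) (p : ℕ → ℝ) (θ : ℝ → ℝ)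
    (hβ : 0 < β) (hρ : 0 ≤ ρ) (hμ : 0 < μ)
    (hμS : 0 ≤ μS) (hμI : 0 ≤ μI) (hμR : 0 ≤ μR)
    (hμsum : μS + μI + μR = μ)
    (hαS : αS ∈ Set.Ioc (0 : ℝ) 1)
    (hp : ∀ k, 0 ≤ p k)
    (hpsummable : Summable p)
    (hpsum : ∑' k : ℕ, p k = 1)
    (hmeanSummable : Summable (fun k : ℕ => (k : ℝ) * p k))
    (hmeanPos : 0 < ∑' k : ℕ, (k : ℝ) * p k)
    (hμSdef : μS = αS * ∑' k : ℕ, (k : ℝ) * p k)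
    (hθ0 : θ 0 = 1)
    (hθmem : ∀ t, 0 ≤ t → θ t ∈ Set.Ioc (0 : ℝ) 1)
    (hθderiv : ∀ t, 0 ≤ t →
      HasDerivAt θ (-β * θ t * hI αS μ μR β ρ p (θ t) / hX μ (θ t)) t)
    (t : ℝ) (ht : 0 ≤ t) :
    Summable (fun k : ℕ => (k : ℝ) * p k *
      ∫ s in (0 : ℝ)..t, θ s ^ (k - 1) * Real.exp (-(β + ρ) * (t - s))) ∧
    μ * ρ / β * (1 - θ t) =
      μI * (ρ / (β + ρ)) * (1 - Real.exp (-(β + ρ) * t)) +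
        μS * (ρ / (β + ρ)) * (1 - Real.exp (-(β + ρ) * t)) -
        ρ * αS * ∑' k : ℕ, (k : ℝ) * p k *
          ∫ s in (0 : ℝ)..t, θ s ^ (k - 1) * Real.exp (-(β + ρ) * (t - s)) :=
  stmt7_general β ρ μ μS μI μR αS p θ hβ hρ hμ hμsum hmeanSummable hθ0 hθmem hθderiv t ht
end

section
/- Define h̃_I(t) = μ_I θ_t e^{−(β+ρ)t} + α_S θ_t Σ_{k≥1} k p_k (−∫_0^t (d/ds θ_s^{k−1}) e^{−(β+ρ)(t−s)} ds). Then for every t ≥ 0 the series defining h̃_I(t) converges and h̃_I(t) = h_I(θ_t). -/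
open scoped BigOperators
open Real

/-!
Write `c = β + ρ` and `G(x) = Σ k p_k x^{k-1}`, so that `hS(x) = α_S x G(x)` and
`hI(x) = x (z(x) - α_S G(x))` with `z(x) = μx - μ_R - (μρ/β)(1 - x)` affine.
Integrating by parts and using `θ_0 = 1`, the `k`-th integral equals
`e^{-ct} - θ_t^{k-1} + c ∫_0^t θ_s^{k-1} e^{-c(t-s)} ds`; since `|θ| ≤ 1` the series over `k`
converges by domination by `k p_k`, to `λ e^{-ct} - G(θ_t) + c ∫_0^t G(θ_s) e^{-c(t-s)} ds`.
On the other hand the ODE for `θ` becomes `z(θ)' = -c (z(θ) - α_S G(θ))`, and the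
variation-of-constants formula for this linear equation, together with `μ_I + α_S λ = μ - μ_R`,
gives exactly the claimed identity.
-/

open Set MeasureTheory intervalIntegral

noncomputable def pgfDeriv (p : ℕ → ℝ) (x : ℝ) : ℝ := ∑' k : ℕ, (k : ℝ) * p k * x ^ (k - 1)

lemma norm_mul_pow_le_norm {a x : ℝ} (hx : x ∈ Icc (-1) 1) (n : ℕ) : ‖a * x ^ n‖ ≤ ‖a‖ := by
  rw [norm_mul, norm_pow]
  exact mul_le_of_le_one_right (norm_nonneg a) (pow_le_one₀ (norm_nonneg x) (abs_le.2 hx))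

section pgfDeriv

variable {p : ℕ → ℝ}

lemma hasSum_pgfDeriv (hm : Summable fun k : ℕ => (k : ℝ) * p k) {x : ℝ} (hx : x ∈ Icc (-1) 1) :
    HasSum (fun k : ℕ => (k : ℝ) * p k * x ^ (k - 1)) (pgfDeriv p x) :=
  (hm.norm.of_norm_bounded fun _ => norm_mul_pow_le_norm hx _).hasSum

lemma continuousOn_pgfDeriv (hm : Summable fun k : ℕ => (k : ℝ) * p k) :
    ContinuousOn (pgfDeriv p) (Icc (-1) 1) := by
  unfold pgfDeriv
  exact continuousOn_tsum (f := fun (k : ℕ) (x : ℝ) => (k : ℝ) * p k * x ^ (k - 1))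
    (fun _ => by fun_prop) hm.norm fun _ _ hx => norm_mul_pow_le_norm hx _

lemma hS_eq_mul_pgfDeriv (αS x : ℝ) : hS αS p x = αS * x * pgfDeriv p x := by
  rw [hS, pgfDeriv, mul_assoc, ← tsum_mul_left (a := x)]
  congr 1
  refine tsum_congr fun k => ?_
  rcases k with _ | k
  · simp
  · rw [Nat.add_sub_cancel, pow_succ]
    ring

lemma hI_eq_mul_pgfDeriv (αS μ μR β ρ x : ℝ) :
    hI αS μ μR β ρ p x = x * (μ * x - μR - μ * ρ / β * (1 - x) - αS * pgfDeriv p x) := by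
  rw [hI, hX, hR, hS_eq_mul_pgfDeriv]
  ring

lemma hasSum_integral_pgfDeriv_comp (hm : Summable fun k : ℕ => (k : ℝ) * p k) {f w : ℝ → ℝ}
    {a b : ℝ} (hf : ContinuousOn f (uIcc a b)) (hfmem : MapsTo f (uIcc a b) (Icc (-1) 1))
    (hw : ContinuousOn w (uIcc a b)) :
    HasSum (fun k : ℕ => (k : ℝ) * p k * ∫ s in a..b, f s ^ (k - 1) * w s)
      (∫ s in a..b, pgfDeriv p (f s) * w s) := by
  simp only [← intervalIntegral.integral_const_mul, ← mul_assoc]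
  refine hasSum_integral_of_dominated_convergence (fun k s => ‖(k : ℝ) * p k‖ * ‖w s‖)
    (fun k => ?_) (fun k => ?_) ?_ ?_ ?_
  · exact (((continuousOn_const.mul (hf.pow _)).mul hw).mono uIoc_subset_uIcc).aestronglyMeasurable
      measurableSet_uIoc
  · refine Filter.Eventually.of_forall fun s hs => ?_
    rw [norm_mul]
    exact mul_le_mul_of_nonneg_right (norm_mul_pow_le_norm (hfmem (uIoc_subset_uIcc hs)) _)
      (norm_nonneg _)
  · exact Filter.Eventually.of_forall fun s _ => hm.norm.mul_right _
  · simp only [tsum_mul_right]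
    exact (continuousOn_const.mul hw.norm).intervalIntegrable
  · exact Filter.Eventually.of_forall fun s hs =>
      (hasSum_pgfDeriv hm (hfmem (uIoc_subset_uIcc hs))).mul_right _

end pgfDeriv

lemma integral_deriv_mul_exp_eq {y y' : ℝ → ℝ} {a b c : ℝ}
    (hy : ∀ s ∈ uIcc a b, HasDerivAt y (y' s) s) (hy' : IntervalIntegrable y' volume a b) :
    ∫ s in a..b, y' s * Real.exp (-c * (b - s)) =
      y b - Real.exp (-c * (b - a)) * y a - c * ∫ s in a..b, y s * Real.exp (-c * (b - s)) := by
  have he : ∀ s, HasDerivAt (fun s => Real.exp (-c * (b - s))) (c * Real.exp (-c * (b - s))) s :=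
    fun s => by simpa [mul_comm] using (((hasDerivAt_id s).const_sub b).const_mul (-c)).exp
  have := intervalIntegral.integral_mul_deriv_eq_deriv_mul (fun s _ => he s) hy
    ((by fun_prop : Continuous fun s => c * Real.exp (-c * (b - s))).intervalIntegrable _ _) hy'
  simp only [sub_self, mul_zero, Real.exp_zero, one_mul, mul_assoc,
    intervalIntegral.integral_const_mul] at this
  simp only [mul_comm (y' _), mul_comm (y _)]
  linarith

lemma neg_mul_hI_div_hX {αS μ μR β ρ x : ℝ} {p : ℕ → ℝ} (hμ : μ ≠ 0) (hx : x ≠ 0) :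
    -β * x * hI αS μ μR β ρ p x / hX μ x =
      -(β / μ) * (μ * x - μR - μ * ρ / β * (1 - x) - αS * pgfDeriv p x) := by
  rw [hI_eq_mul_pgfDeriv, hX]
  field_simp

lemma neg_integral_deriv_pow_mul_exp {f f' : ℝ → ℝ} {c t : ℝ} (n : ℕ)
    (hf : ∀ s ∈ uIcc 0 t, HasDerivAt f (f' s) s) (hf' : ContinuousOn f' (uIcc 0 t)) (hf0 : f 0 = 1) :
    -∫ s in (0 : ℝ)..t, deriv (fun u => f u ^ n) s * Real.exp (-c * (t - s)) =
      Real.exp (-c * t) - f t ^ n + c * ∫ s in (0 : ℝ)..t, f s ^ n * Real.exp (-c * (t - s)) := by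
  have hpow : ∀ s ∈ uIcc 0 t, HasDerivAt (fun u => f u ^ n) (n * f s ^ (n - 1) * f' s) s :=
    fun s hs => (hf s hs).pow n
  have hcont : ContinuousOn f (uIcc 0 t) := fun s hs => (hf s hs).continuousAt.continuousWithinAt
  have hderiv : IntervalIntegrable (fun s => deriv (fun u => f u ^ n) s) volume 0 t :=
    (((continuousOn_const.mul (hcont.pow _)).mul hf').congr fun s hs =>
      (hpow s hs).deriv).intervalIntegrable
  rw [integral_deriv_mul_exp_eq (fun s hs => by simpa only [(hpow s hs).deriv] using hpow s hs)
    hderiv, hf0, sub_zero]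
  ring

lemma affine_theta_eq_integral {β ρ μ μR αS t : ℝ} {p : ℕ → ℝ} {θ : ℝ → ℝ} (hβ : β ≠ 0)
    (hμ : μ ≠ 0) (hθ0 : θ 0 = 1)
    (hθ : ∀ s ∈ uIcc 0 t, HasDerivAt θ
      (-(β / μ) * (μ * θ s - μR - μ * ρ / β * (1 - θ s) - αS * pgfDeriv p (θ s))) s)
    (hG : ContinuousOn (fun s => pgfDeriv p (θ s)) (uIcc 0 t)) :
    μ * θ t - μR - μ * ρ / β * (1 - θ t) = Real.exp (-(β + ρ) * t) * (μ - μR) +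
      (β + ρ) * αS * ∫ s in (0 : ℝ)..t, pgfDeriv p (θ s) * Real.exp (-(β + ρ) * (t - s)) := by
  set z := fun s => μ * θ s - μR - μ * ρ / β * (1 - θ s)
  have hz : ∀ s ∈ uIcc 0 t,
      HasDerivAt z ((β + ρ) * αS * pgfDeriv p (θ s) - (β + ρ) * z s) s := fun s hs => by
    refine ((((hθ s hs).const_mul μ).sub_const μR).sub
      (((hθ s hs).const_sub 1).const_mul (μ * ρ / β))).congr_deriv ?_
    simp only [z]
    field_simp
    ring
  have hzc : ContinuousOn z (uIcc 0 t) := fun s hs => (hz s hs).continuousAt.continuousWithinAt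
  have hint : ∀ {g : ℝ → ℝ}, ContinuousOn g (uIcc 0 t) →
      IntervalIntegrable (fun s => g s * Real.exp (-(β + ρ) * (t - s))) volume 0 t :=
    fun hg => (hg.mul (by fun_prop)).intervalIntegrable
  have key := integral_deriv_mul_exp_eq (c := β + ρ) hz
    ((continuousOn_const.mul hG).sub (continuousOn_const.mul hzc)).intervalIntegrable
  simp only [sub_mul, mul_assoc] at key
  rw [intervalIntegral.integral_sub (hint hG |>.const_mul _ |>.const_mul _)
    (hint hzc |>.const_mul _), intervalIntegral.integral_const_mul,
    intervalIntegral.integral_const_mul, intervalIntegral.integral_const_mul, sub_zero] at key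
  simp only [z, hθ0] at key ⊢
  linear_combination -key

theorem stmt9_general
    (β ρ μ μS μI μR αS : ℝ) (p : ℕ → ℝ) (θ : ℝ → ℝ)
    (hβ : 0 < β) (hμ : 0 < μ)
    (hμsum : μS + μI + μR = μ)
    (hmeanSummable : Summable (fun k : ℕ => (k : ℝ) * p k))
    (hμSdef : μS = αS * ∑' k : ℕ, (k : ℝ) * p k)
    (hθ0 : θ 0 = 1)
    (hθmem : ∀ t, 0 ≤ t → θ t ∈ Set.Ioc (0 : ℝ) 1)
    (hθderiv : ∀ t, 0 ≤ t →
      HasDerivAt θ (-β * θ t * hI αS μ μR β ρ p (θ t) / hX μ (θ t)) t)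
    (t : ℝ) (ht : 0 ≤ t) :
    Summable (fun k : ℕ => (k : ℝ) * p k *
      -∫ s in (0 : ℝ)..t,
          deriv (fun u => θ u ^ (k - 1)) s * Real.exp (-(β + ρ) * (t - s))) ∧
    μI * θ t * Real.exp (-(β + ρ) * t) +
        αS * θ t * ∑' k : ℕ, (k : ℝ) * p k *
          -∫ s in (0 : ℝ)..t,
              deriv (fun u => θ u ^ (k - 1)) s * Real.exp (-(β + ρ) * (t - s)) =
      hI αS μ μR β ρ p (θ t) := by
  have hθmaps : MapsTo θ (uIcc 0 t) (Icc (-1) 1) := fun s hs =>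
    have := hθmem s ((uIcc_of_le ht).subset hs |>.1)
    ⟨by linarith [this.1], this.2⟩
  have hθ' : ∀ s ∈ uIcc 0 t, HasDerivAt θ
      (-(β / μ) * (μ * θ s - μR - μ * ρ / β * (1 - θ s) - αS * pgfDeriv p (θ s))) s := by
    intro s hs
    have hs0 : 0 ≤ s := ((uIcc_of_le ht).subset hs).1
    simpa only [neg_mul_hI_div_hX hμ.ne' (hθmem s hs0).1.ne'] using hθderiv s hs0
  have hθc : ContinuousOn θ (uIcc 0 t) := fun s hs => (hθ' s hs).continuousAt.continuousWithinAt
  have hG : ContinuousOn (fun s => pgfDeriv p (θ s)) (uIcc 0 t) :=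
    (continuousOn_pgfDeriv hmeanSummable).comp hθc hθmaps
  have hv : ContinuousOn (fun s =>
      -(β / μ) * (μ * θ s - μR - μ * ρ / β * (1 - θ s) - αS * pgfDeriv p (θ s))) (uIcc 0 t) := by
    fun_prop
  have hsum : HasSum (fun k : ℕ => (k : ℝ) * p k *
      -∫ s in (0 : ℝ)..t, deriv (fun u => θ u ^ (k - 1)) s * Real.exp (-(β + ρ) * (t - s)))
      ((∑' k : ℕ, (k : ℝ) * p k) * Real.exp (-(β + ρ) * t) - pgfDeriv p (θ t) + (β + ρ) *
        ∫ s in (0 : ℝ)..t, pgfDeriv p (θ s) * Real.exp (-(β + ρ) * (t - s))) := by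
    refine HasSum.congr_fun (((hmeanSummable.hasSum.mul_right _).sub
      (hasSum_pgfDeriv hmeanSummable (hθmaps right_mem_uIcc))).add
      ((hasSum_integral_pgfDeriv_comp hmeanSummable hθc hθmaps
        (w := fun s => Real.exp (-(β + ρ) * (t - s))) (by fun_prop)).mul_left (β + ρ))) fun k => ?_
    rw [neg_integral_deriv_pow_mul_exp _ hθ' hv hθ0]
    ring
  refine ⟨hsum.summable, ?_⟩
  rw [hsum.tsum_eq, hI_eq_mul_pgfDeriv]
  linear_combination -θ t * affine_theta_eq_integral hβ.ne' hμ.ne' hθ0 hθ' hG +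
    θ t * Real.exp (-(β + ρ) * t) * (hμsum - hμSdef)

theorem stmt9
    (β ρ μ μS μI μR αS : ℝ) (p : ℕ → ℝ) (θ : ℝ → ℝ)
    (hβ : 0 < β) (hρ : 0 ≤ ρ) (hμ : 0 < μ)
    (hμS : 0 ≤ μS) (hμI : 0 ≤ μI) (hμR : 0 ≤ μR)
    (hμsum : μS + μI + μR = μ)
    (hαS : αS ∈ Set.Ioc (0 : ℝ) 1)
    (hp : ∀ k, 0 ≤ p k)
    (hpsummable : Summable p)
    (hpsum : ∑' k : ℕ, p k = 1)
    (hmeanSummable : Summable (fun k : ℕ => (k : ℝ) * p k))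
    (hmeanPos : 0 < ∑' k : ℕ, (k : ℝ) * p k)
    (hμSdef : μS = αS * ∑' k : ℕ, (k : ℝ) * p k)
    (hθ0 : θ 0 = 1)
    (hθmem : ∀ t, 0 ≤ t → θ t ∈ Set.Ioc (0 : ℝ) 1)
    (hθderiv : ∀ t, 0 ≤ t →
      HasDerivAt θ (-β * θ t * hI αS μ μR β ρ p (θ t) / hX μ (θ t)) t)
    (t : ℝ) (ht : 0 ≤ t) :
    Summable (fun k : ℕ => (k : ℝ) * p k *
      -∫ s in (0 : ℝ)..t,
          deriv (fun u => θ u ^ (k - 1)) s * Real.exp (-(β + ρ) * (t - s))) ∧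
    μI * θ t * Real.exp (-(β + ρ) * t) +
        αS * θ t * ∑' k : ℕ, (k : ℝ) * p k *
          -∫ s in (0 : ℝ)..t,
              deriv (fun u => θ u ^ (k - 1)) s * Real.exp (-(β + ρ) * (t - s)) =
      hI αS μ μR β ρ p (θ t) :=
  stmt9_general β ρ μ μS μI μR αS p θ hβ hμ hμsum hmeanSummable hμSdef hθ0 hθmem hθderiv t ht
end
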